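/- For n ≥ 3 and p,q,p′,q′ ≥ 1 with p+q = p′+q′ = n−1, the identity x^p h x^q k ≈ x^{p′} h k x^{q′} is equationally equivalent to the pair of identities x^p h x^q ≈ x^{p′} h x^{q′} and x^{n−1} k ≈ x^{p′} k x^{q′}: each side is deducible from the other in monoid equational logic. -/

import Mathlib

abbrev Word := List ℕ

def subst (φ : ℕ → Word) (w : Word) : Word := w.flatMap φ

inductive Deduce (S : Set (Word × Word)) : Word → Word → Prop
  | refl (w : Word) : Deduce S w w
  | symm {u v : Word} : Deduce S u v → Deduce S v u
  | trans {u v w : Word} : Deduce S u v → Deduce S v w → Deduce S u w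
  | step (a b : Word) (φ : ℕ → Word) {s t : Word} (h : (s, t) ∈ S) :
      Deduce S (a ++ subst φ s ++ b) (a ++ subst φ t ++ b)

def FM (w : Word) : Type := Option {u : Word // u <:+: w}

def fmul {w : Word} : FM w → FM w → FM w
  | some u, some v =>
      if h : (u.1 ++ v.1) <:+: w then some ⟨u.1 ++ v.1, h⟩ else none
  | _, _ => none

def fone (w : Word) : FM w := some ⟨[], List.nil_infix⟩

theorem fmul_none_left {w : Word} (a : FM w) : fmul none a = none := rfl

theorem fmul_none_right {w : Word} (a : FM w) : fmul a none = none := by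
  rcases a with _ | u <;> rfl

theorem fmul_some {w : Word} (u v : {u : Word // u <:+: w}) :
    fmul (some u) (some v) =
      if h : (u.1 ++ v.1) <:+: w then some ⟨u.1 ++ v.1, h⟩ else none := rfl

theorem fmul_assoc {w : Word} (a b c : FM w) : fmul (fmul a b) c = fmul a (fmul b c) := by
  rcases a with _ | u
  · rfl
  rcases b with _ | v
  · rfl
  rcases c with _ | t
  · exact (fmul_none_right _).trans
      ((congrArg (fmul (some u)) (fmul_none_right (some v))).trans (fmul_none_right _)).symm
  rw [fmul_some, fmul_some]
  by_cases h : (u.1 ++ v.1 ++ t.1) <:+: w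
  · have h1 : (u.1 ++ v.1) <:+: w := List.IsInfix.trans ⟨[], t.1, by simp⟩ h
    have h2 : (v.1 ++ t.1) <:+: w := List.IsInfix.trans ⟨u.1, [], by simp⟩ h
    rw [dif_pos h1, fmul_some, dif_pos h2, fmul_some, dif_pos h,
      dif_pos (show (u.1 ++ (v.1 ++ t.1)) <:+: w by simpa [List.append_assoc] using h)]
    simp [List.append_assoc]
    rfl
  · by_cases h1 : (u.1 ++ v.1) <:+: w
    · rw [dif_pos h1, fmul_some, dif_neg h]
      by_cases h2 : (v.1 ++ t.1) <:+: w
      · rw [dif_pos h2, fmul_some,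
          dif_neg (fun hh => h (by simpa [List.append_assoc] using hh))]
      · rw [dif_neg h2]
        exact (fmul_none_right _).symm
    · rw [dif_neg h1]
      change none = _
      by_cases h2 : (v.1 ++ t.1) <:+: w
      · rw [dif_pos h2, fmul_some,
          dif_neg (fun hh => h1 (List.IsInfix.trans ⟨[], t.1, by simp⟩ hh))]
      · rw [dif_neg h2]
        exact (fmul_none_right _).symm

instance (w : Word) : Monoid (FM w) where
  mul := fmul
  one := fone w
  mul_assoc := fmul_assoc
  one_mul := by
    rintro (_ | u)
    · rfl
    · show fmul (fone w) (some u) = some u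
      rw [fone, fmul_some, dif_pos (by simpa using u.2)]
      simp
      rfl
  mul_one := by
    rintro (_ | u)
    · rfl
    · show fmul (some u) (fone w) = some u
      rw [fone, fmul_some, dif_pos (by simpa using u.2)]
      simp
      rfl

def SatId (M : Type) [Monoid M] (p : Word × Word) : Prop :=
  ∀ φ : ℕ → M, (p.1.map φ).prod = (p.2.map φ).prod

def VSat (E : Set (Word × Word)) (p : Word × Word) : Prop :=
  ∀ (M : Type) [Monoid M], (∀ q ∈ E, SatId M q) → SatId M p

def ids0 : Set (Word × Word) :=
  {([0,1,2,0,3,1],[1,0,2,0,3,1]), ([0,2,0,1,3,1],[0,2,1,0,3,1]), ([0,2,1,3,0,1],[0,2,1,3,1,0])}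

def idA (n : ℕ) : Word × Word :=
  (List.replicate n 0 ++ (List.range n).map (· + 1),
   ((List.range n).map (fun i => [i + 1, 0])).flatten)

def rigid (e₀ : ℕ) (es : List ℕ) : Word :=
  List.replicate e₀ 0 ++ (es.zipIdx.map (fun p => (p.2 + 1) :: List.replicate p.1 0)).flatten

def Bword (n i : ℕ) : Word := List.replicate i 0 ++ 1 :: List.replicate (n - 1 - i) 0

def wmr (m r : ℕ) : Word := rigid (m - 1) (List.replicate r (m - 1))

def X (p : ℕ) : Word := List.replicate p 0

/-! Each direction is a substitution instance of the given identities, multiplied on the right by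
`k` where needed. Erasing `k` or `h` in `x^p h x^q k ≈ x^{p'} h k x^{q'}` gives the two
identities of the pair. Conversely, `x^p h x^q k ≈ x^{p'} h x^{q'} k` by the first identity; the
second with `k ↦ h`, multiplied by `k`, gives `x^{p'} h x^{q'} k ≈ x^{n-1} h k`; and the second
with `k ↦ h k` gives `x^{n-1} h k ≈ x^{p'} h k x^{q'}`. -/

@[simp]
lemma subst_nil (φ : ℕ → Word) : subst φ [] = [] := rfl

@[simp]
lemma subst_append (φ : ℕ → Word) (u v : Word) :
    subst φ (u ++ v) = subst φ u ++ subst φ v := by simp [subst]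

@[simp]
lemma subst_cons (φ : ℕ → Word) (i : ℕ) (w : Word) :
    subst φ (i :: w) = φ i ++ subst φ w := by simp [subst]

@[simp]
lemma subst_X (φ : ℕ → Word) (h : φ 0 = [0]) (m : ℕ) : subst φ (X m) = X m := by
  induction m with
  | zero => rfl
  | succ k ih => rw [X, List.replicate_succ, subst_cons, h, ← X, ih]; rfl

lemma X_add (a b : ℕ) : X (a + b) = X a ++ X b := List.replicate_add a b 0

def assign (i : ℕ) (w : Word) : ℕ → Word := fun j => if j = i then w else [j]

@[simp]
lemma assign_self (i : ℕ) (w : Word) : assign i w i = w := if_pos rfl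

@[simp]
lemma assign_of_ne {i j : ℕ} (w : Word) (h : j ≠ i) : assign i w j = [j] := if_neg h

namespace Deduce

variable {S : Set (Word × Word)}

lemma of_mem_subst {s t : Word} (h : (s, t) ∈ S) (φ : ℕ → Word) :
    Deduce S (subst φ s) (subst φ t) := by
  simpa using step [] [] φ h

lemma append_right {u v : Word} (h : Deduce S u v) (c : Word) : Deduce S (u ++ c) (v ++ c) := by
  induction h with
  | refl _ => exact refl _
  | symm _ ih => exact ih.symm
  | trans _ _ ih₁ ih₂ => exact ih₁.trans ih₂
  | step a b φ hst => simpa only [List.append_assoc] using step a (b ++ c) φ hst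

end Deduce

section

variable {S : Set (Word × Word)} {p q p' q' : ℕ}

lemma deduce_joint_of_pair {m : ℕ} (hh : (X p ++ [1] ++ X q, X p' ++ [1] ++ X q') ∈ S)
    (hk : (X m ++ [2], X p' ++ [2] ++ X q') ∈ S) :
    Deduce S (X p ++ [1] ++ X q ++ [2]) (X p' ++ [1, 2] ++ X q') := by
  have h_swap : Deduce S (X p ++ [1] ++ X q ++ [2]) (X p' ++ [1] ++ X q' ++ [2]) := by
    simpa using (Deduce.of_mem_subst hh (fun j => [j])).append_right [2]
  have k_to_h : Deduce S (X m ++ [1] ++ [2]) (X p' ++ [1] ++ X q' ++ [2]) := by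
    simpa using (Deduce.of_mem_subst hk (assign 2 [1])).append_right [2]
  have k_to_hk : Deduce S (X m ++ [1] ++ [2]) (X p' ++ [1, 2] ++ X q') := by
    simpa using Deduce.of_mem_subst hk (assign 2 [1, 2])
  exact (h_swap.trans k_to_h.symm).trans k_to_hk

lemma deduce_left_of_joint (h : (X p ++ [1] ++ X q ++ [2], X p' ++ [1, 2] ++ X q') ∈ S) :
    Deduce S (X p ++ [1] ++ X q) (X p' ++ [1] ++ X q') := by
  simpa using Deduce.of_mem_subst h (assign 2 [])

lemma deduce_right_of_joint (h : (X p ++ [1] ++ X q ++ [2], X p' ++ [1, 2] ++ X q') ∈ S) :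
    Deduce S (X (p + q) ++ [2]) (X p' ++ [2] ++ X q') := by
  simpa [X_add] using Deduce.of_mem_subst h (assign 1 [])

end

theorem stmt5_general (n p q p' q' : ℕ)
    (hpq : p + q = n - 1) :
    Deduce {(X p ++ [1] ++ X q, X p' ++ [1] ++ X q'),
            (X (n-1) ++ [2], X p' ++ [2] ++ X q')}
      (X p ++ [1] ++ X q ++ [2]) (X p' ++ [1, 2] ++ X q') ∧
    Deduce {(X p ++ [1] ++ X q ++ [2], X p' ++ [1, 2] ++ X q')}
      (X p ++ [1] ++ X q) (X p' ++ [1] ++ X q') ∧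
    Deduce {(X p ++ [1] ++ X q ++ [2], X p' ++ [1, 2] ++ X q')}
      (X (n-1) ++ [2]) (X p' ++ [2] ++ X q') :=
  ⟨deduce_joint_of_pair (Set.mem_insert _ _) (Set.mem_insert_of_mem _ rfl),
    deduce_left_of_joint rfl, hpq ▸ deduce_right_of_joint rfl⟩

/-- For `n ≥ 3` and `p,q,p',q' ≥ 1` with `p+q = p'+q' = n-1`, the identity
`x^p h x^q k ≈ x^{p'} h k x^{q'}` is equationally equivalent to the pair
`x^p h x^q ≈ x^{p'} h x^{q'}` and `x^{n-1} k ≈ x^{p'} k x^{q'}`.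
(Variables: `x = 0`, `h = 1`, `k = 2`.) -/
theorem stmt5 (n p q p' q' : ℕ) (hn : 3 ≤ n)
    (hp : 1 ≤ p) (hq : 1 ≤ q) (hp' : 1 ≤ p') (hq' : 1 ≤ q')
    (hpq : p + q = n - 1) (hpq' : p' + q' = n - 1) :
    Deduce {(X p ++ [1] ++ X q, X p' ++ [1] ++ X q'),
            (X (n-1) ++ [2], X p' ++ [2] ++ X q')}
      (X p ++ [1] ++ X q ++ [2]) (X p' ++ [1, 2] ++ X q') ∧
    Deduce {(X p ++ [1] ++ X q ++ [2], X p' ++ [1, 2] ++ X q')}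
      (X p ++ [1] ++ X q) (X p' ++ [1] ++ X q') ∧
    Deduce {(X p ++ [1] ++ X q ++ [2], X p' ++ [1, 2] ++ X q')}
      (X (n-1) ++ [2]) (X p' ++ [2] ++ X q') :=
  stmt5_general n p q p' q' hpq
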